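/- arXiv:2407.05162 — 5 statements merged into one kernel-verified Lean document; each statement's English description precedes it below -/
import Mathlib

section
/- The unique real solution α of 4/2^α + 22/4^α = 1 satisfies 2.82 < α < 2.83. -/
/-! With `x = 2 ^ α` we have `4 ^ α = x ^ 2`, so the equation becomes `x ^ 2 = 4 x + 22`, whose only
positive root is `x = 2 + √26 ∈ (7.099, 7.0995)`. Hence the unique solution is `α = log₂ (2 + √26)`,
and the bounds follow from `2 ^ 2.82 < 7.099` and `7.0995 < 2 ^ 2.83`, checked on integer powers. -/

open Real

lemma div_add_div_sq_eq_one_iff {a b x : ℝ} (hb : 0 ≤ b) (hx : 0 < x) :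
    a / x + b / x ^ 2 = 1 ↔ x = (a + √(a ^ 2 + 4 * b)) / 2 := by
  have hs : √(a ^ 2 + 4 * b) ^ 2 = a ^ 2 + 4 * b := sq_sqrt (by positivity)
  have ha : a ≤ √(a ^ 2 + 4 * b) := le_sqrt_of_sq_le (by linarith)
  rw [div_add_div _ _ hx.ne' (by positivity), div_eq_one_iff_eq (by positivity)]
  constructor
  · intro h
    have hfac : (x - (a + √(a ^ 2 + 4 * b)) / 2) * (x - (a - √(a ^ 2 + 4 * b)) / 2) = 0 := by
      nlinarith
    rcases mul_eq_zero.mp hfac with hplus | hminus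
    · linarith
    · nlinarith
  · rintro rfl
    nlinarith

lemma rpow_div_lt_iff {x y : ℝ} (hx : 0 ≤ x) (hy : 0 ≤ y) (m : ℕ) {n : ℕ} (hn : 0 < n) :
    x ^ ((m : ℝ) / n) < y ↔ x ^ m < y ^ n := by
  rw [div_eq_mul_inv, rpow_natCast_mul hx,
    rpow_inv_lt_iff_of_pos (by positivity) hy (by positivity), rpow_natCast]

lemma lt_rpow_div_iff {x y : ℝ} (hx : 0 ≤ x) (hy : 0 ≤ y) (m : ℕ) {n : ℕ} (hn : 0 < n) :
    y < x ^ ((m : ℝ) / n) ↔ y ^ n < x ^ m := by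
  rw [div_eq_mul_inv, rpow_natCast_mul hx,
    lt_rpow_inv_iff_of_pos hy (by positivity) (by positivity), rpow_natCast]

lemma rpow_eq_iff_eq_logb {b x α : ℝ} (hb₀ : 0 < b) (hb₁ : b ≠ 1) (hx : 0 < x) :
    b ^ α = x ↔ α = logb b x := by
  rw [← logb_eq_iff_rpow_eq hb₀ hb₁ hx, eq_comm]

lemma logb_two_root_mem_Ioo :
    logb 2 ((4 + √(4 ^ 2 + 4 * 22)) / 2) ∈ Set.Ioo (2.82 : ℝ) 2.83 := by
  have hlow : (10.198 : ℝ) < √(4 ^ 2 + 4 * 22) := lt_sqrt_of_sq_lt (by norm_num)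
  have hhigh : √(4 ^ 2 + 4 * 22) < (10.199 : ℝ) := (sqrt_lt' (by norm_num)).2 (by norm_num)
  have hpos : (0 : ℝ) < (4 + √(4 ^ 2 + 4 * 22)) / 2 := by positivity
  have h282 : (2 : ℝ) ^ (2.82 : ℝ) < 7.099 := by
    rw [show (2.82 : ℝ) = (141 : ℕ) / (50 : ℕ) by norm_num,
      rpow_div_lt_iff (by norm_num) (by norm_num) _ (by norm_num)]
    norm_num
  have h283 : (7.0995 : ℝ) < 2 ^ (2.83 : ℝ) := by
    rw [show (2.83 : ℝ) = (283 : ℕ) / (100 : ℕ) by norm_num,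
      lt_rpow_div_iff (by norm_num) (by norm_num) _ (by norm_num)]
    -- `norm_num` leaves powers with exponent above 256 unevaluated.
    rw [show (2 : ℝ) ^ 283 = (2 ^ 141) ^ 2 * 2 by rw [← pow_mul, ← pow_succ]]
    norm_num
  constructor
  · rw [lt_logb_iff_rpow_lt (by norm_num) hpos]
    linarith
  · rw [logb_lt_iff_lt_rpow (by norm_num) hpos]
    linarith

theorem root_g_bounds :
    (∃! α : ℝ, 4 / (2:ℝ) ^ α + 22 / (4:ℝ) ^ α = 1) ∧
    (∀ α : ℝ, 4 / (2:ℝ) ^ α + 22 / (4:ℝ) ^ α = 1 → 2.82 < α ∧ α < 2.83) := by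
  have hsolution (α : ℝ) : 4 / (2:ℝ) ^ α + 22 / (4:ℝ) ^ α = 1 ↔
      α = logb 2 ((4 + √(4 ^ 2 + 4 * 22)) / 2) := by
    rw [show (4 : ℝ) ^ α = ((2 : ℝ) ^ α) ^ 2 by
        rw [rpow_pow_comm (by norm_num)]; norm_num,
      div_add_div_sq_eq_one_iff (by norm_num) (by positivity),
      rpow_eq_iff_eq_logb (by norm_num) (by norm_num) (by positivity)]
  refine ⟨⟨_, (hsolution _).2 rfl, fun β hβ => (hsolution β).1 hβ⟩, fun α hα => ?_⟩
  rw [hsolution] at hα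
  exact hα ▸ logb_two_root_mem_Ioo
end

section
/- The unique real solution α of 4/2^α + 12/4^α + 60/8^α = 1 satisfies 2.79 < α < 2.80. -/
/-!
Each term `c / b ^ α` with `b > 1` is continuous and strictly decreasing in `α`, so `h` has at
most one root, and exactly one in `(2.79, 2.80)` once `h 2.79 > 1 > h 2.80`. Writing `t = 2 ^ α`,
`h α = 4 / t + 12 / t ^ 2 + 60 / t ^ 3`, so these two values follow from
`2 ^ 2.79 < 6.92` and `6.962 < 2 ^ 2.8`, i.e. from `2 ^ 279 < 6.92 ^ 100` and `6.962 ^ 5 < 2 ^ 14`.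
-/

open Real

theorem StrictAnti.existsUnique_eq_and_mem_Ioo {f : ℝ → ℝ} (hcont : Continuous f)
    (hanti : StrictAnti f) {a b c : ℝ} (hab : a ≤ b) (hb : f b < c) (ha : c < f a) :
    (∃! x, f x = c) ∧ ∀ x, f x = c → a < x ∧ x < b := by
  obtain ⟨x, -, hx⟩ := intermediate_value_Icc' hab hcont.continuousOn ⟨hb.le, ha.le⟩
  refine ⟨⟨x, hx, fun y hy => hanti.injective (hy.trans hx.symm)⟩, fun y hy => ?_⟩
  exact ⟨hanti.lt_iff_gt.mp (hy ▸ ha), hanti.lt_iff_gt.mp (hy ▸ hb)⟩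

namespace Real

lemma rpow_div_natCast_lt_iff {x y : ℝ} (hx : 0 ≤ x) (hy : 0 ≤ y) (m : ℕ) {n : ℕ} (hn : n ≠ 0) :
    x ^ ((m : ℝ) / n) < y ↔ x ^ m < y ^ n := by
  rw [div_eq_mul_inv, rpow_natCast_mul hx, rpow_inv_lt_iff_of_pos (pow_nonneg hx m) hy
    (by positivity), rpow_natCast]

lemma lt_rpow_div_natCast_iff {x y : ℝ} (hx : 0 ≤ x) (hy : 0 ≤ y) (m : ℕ) {n : ℕ} (hn : n ≠ 0) :
    y < x ^ ((m : ℝ) / n) ↔ y ^ n < x ^ m := by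
  rw [div_eq_mul_inv, rpow_natCast_mul hx, lt_rpow_inv_iff_of_pos hy (pow_nonneg hx m)
    (by positivity), rpow_natCast]

lemma strictAnti_const_div_rpow {b c : ℝ} (hb : 1 < b) (hc : 0 < c) :
    StrictAnti fun α : ℝ => c / b ^ α := fun _ _ hxy =>
  div_lt_div_of_pos_left hc (rpow_pos_of_pos (zero_lt_one.trans hb) _)
    (rpow_lt_rpow_of_exponent_lt hb hxy)

lemma continuous_const_div_rpow {b : ℝ} (hb : 0 < b) (c : ℝ) :
    Continuous fun α : ℝ => c / b ^ α :=
  continuous_const.div (continuous_const.rpow continuous_id fun _ => Or.inl hb.ne')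
    fun α => (rpow_pos_of_pos hb α).ne'

end Real

namespace RootH

noncomputable def h (α : ℝ) : ℝ := 4 / (2:ℝ) ^ α + 12 / (4:ℝ) ^ α + 60 / (8:ℝ) ^ α

lemma h_eq_two_rpow (α : ℝ) : h α = 4 / 2 ^ α + 12 / (2 ^ α) ^ 2 + 60 / ((2:ℝ) ^ α) ^ 3 := by
  rw [h, rpow_pow_comm zero_le_two, rpow_pow_comm zero_le_two]
  norm_num

lemma strictAnti_h : StrictAnti h :=
  ((strictAnti_const_div_rpow one_lt_two four_pos).add
    (strictAnti_const_div_rpow (by norm_num) (by norm_num))).add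
    (strictAnti_const_div_rpow (by norm_num) (by norm_num))

lemma continuous_h : Continuous h :=
  ((continuous_const_div_rpow two_pos _).add (continuous_const_div_rpow four_pos _)).add
    (continuous_const_div_rpow (by norm_num) _)

lemma two_rpow_lt : (2:ℝ) ^ (2.79:ℝ) < 6.92 := by
  rw [show (2.79:ℝ) = ((279:ℕ):ℝ) / (100:ℕ) by norm_num,
    rpow_div_natCast_lt_iff zero_le_two (by norm_num) _ (by norm_num)]
  -- `norm_num` leaves `2 ^ 279` unevaluated, but not `(2 ^ 93) ^ 3`
  rw [show 279 = 93 * 3 from rfl, pow_mul]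
  norm_num

lemma lt_two_rpow : (6.962:ℝ) < 2 ^ (2.80:ℝ) := by
  rw [show (2.80:ℝ) = ((14:ℕ):ℝ) / (5:ℕ) by norm_num,
    lt_rpow_div_natCast_iff zero_le_two (by norm_num) _ (by norm_num)]
  norm_num

lemma one_lt_h : 1 < h 2.79 := by
  have ht := two_rpow_lt
  rw [h_eq_two_rpow]
  calc (1:ℝ) < 4 / 6.92 + 12 / 6.92 ^ 2 + 60 / 6.92 ^ 3 := by norm_num
    _ < _ := by gcongr

lemma h_lt_one : h 2.80 < 1 := by
  have ht := lt_two_rpow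
  rw [h_eq_two_rpow]
  calc _ < 4 / 6.962 + 12 / 6.962 ^ 2 + 60 / (6.962:ℝ) ^ 3 := by gcongr
    _ < 1 := by norm_num

end RootH

open RootH in
theorem root_h_bounds :
    (∃! α : ℝ, 4 / (2:ℝ) ^ α + 12 / (4:ℝ) ^ α + 60 / (8:ℝ) ^ α = 1) ∧
    (∀ α : ℝ, 4 / (2:ℝ) ^ α + 12 / (4:ℝ) ^ α + 60 / (8:ℝ) ^ α = 1 →
      2.79 < α ∧ α < 2.80) :=
  strictAnti_h.existsUnique_eq_and_mem_Ioo continuous_h (by norm_num) h_lt_one one_lt_h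
end

section
/- Let α > 0 satisfy 4/2^α + 22/4^α = 1, and let D : ℕ → ℝ≥0 satisfy D(k) ≤ 4·D(⌈k/2⌉) + 22·D(⌈k/4⌉) + c for all k ≥ 4, with D(k) bounded by C₀ for k < 4. Then there exists C such that D(k) ≤ C·(k+1)^α for all k. -/
/-!
Writing `k = j + 1` turns the ceilings `⌈k/p⌉` into `⌊j/p⌋ + 1`, i.e. the recurrence becomes a
floor recurrence for `E j = D (j + 1)`. For that one proves by strong induction the strengthened
bound `E j + B ≤ C j^α` (`j ≥ 1`): since `⌊j/p⌋^α ≤ j^α / p^α`, the root condition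
`∑ aᵢ / pᵢ^α ≤ 1` reproduces the main term, and because `∑ aᵢ > 1` the subtracted constant `B`
pays for the additive `c`.
-/

open scoped NNReal
open Finset

theorem le_sum_abs_range (f : ℕ → ℝ) {j N : ℕ} (hj : j < N) : f j ≤ ∑ i ∈ range N, |f i| :=
  (le_abs_self _).trans (single_le_sum (fun i _ => abs_nonneg (f i)) (mem_range.2 hj))

theorem exists_forall_le_mul_of_forall_ge {f g : ℕ → ℝ} {C : ℝ} {N : ℕ} (hg : ∀ j, 1 ≤ g j)
    (h : ∀ j ≥ N, f j ≤ C * g j) : ∃ C', ∀ j, f j ≤ C' * g j := by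
  set S := ∑ i ∈ range N, |f i|
  refine ⟨max C S, fun j => ?_⟩
  have hg0 : 0 ≤ g j := zero_le_one.trans (hg j)
  rcases le_or_gt N j with hj | hj
  · exact (h j hj).trans (mul_le_mul_of_nonneg_right (le_max_left _ _) hg0)
  · calc f j ≤ S := le_sum_abs_range f hj
      _ ≤ S * g j := le_mul_of_one_le_right (sum_nonneg fun i _ => abs_nonneg _) (hg j)
      _ ≤ max C S * g j := mul_le_mul_of_nonneg_right (le_max_right _ _) hg0

theorem natCast_div_rpow_le {α : ℝ} (hα : 0 ≤ α) (j p : ℕ) :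
    ((j / p : ℕ) : ℝ) ^ α ≤ (j : ℝ) ^ α / (p : ℝ) ^ α := by
  rw [← Real.div_rpow (Nat.cast_nonneg j) (Nat.cast_nonneg p)]
  exact Real.rpow_le_rpow (Nat.cast_nonneg _) Nat.cast_div_le hα

section FloorRecurrence

variable {ι : Type*} {s : Finset ι} {a : ι → ℝ} {p : ι → ℕ} {E : ℕ → ℝ} {α c : ℝ} {N : ℕ}

theorem add_le_mul_rpow_of_floor_recurrence {B C : ℝ} (hα : 0 ≤ α) (ha : ∀ i ∈ s, 0 ≤ a i)
    (hp : ∀ i ∈ s, 2 ≤ p i ∧ p i ≤ N) (hroot : ∑ i ∈ s, a i / (p i : ℝ) ^ α ≤ 1)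
    (hB : c ≤ (∑ i ∈ s, a i - 1) * B) (hC : 0 ≤ C)
    (hrec : ∀ j ≥ N, E j ≤ ∑ i ∈ s, a i * E (j / p i) + c)
    (hbase : ∀ j, 1 ≤ j → j < N → E j + B ≤ C * (j : ℝ) ^ α) :
    ∀ j, 1 ≤ j → E j + B ≤ C * (j : ℝ) ^ α := by
  intro j
  induction j using Nat.strong_induction_on with
  | _ j ih =>
    intro hj
    rcases lt_or_ge j N with hjN | hjN
    · exact hbase j hj hjN
    have hterm : ∀ i ∈ s,
        a i * E (j / p i) ≤ C * (j : ℝ) ^ α * (a i / (p i : ℝ) ^ α) - a i * B := by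
      intro i hi
      obtain ⟨hp2, hpN⟩ := hp i hi
      have hpos : 1 ≤ j / p i := (Nat.le_div_iff_mul_le (by omega)).2 (by omega)
      have hlt : j / p i < j := Nat.div_lt_self (by omega) (by omega)
      have hE : E (j / p i) ≤ C * ((j : ℝ) ^ α / (p i : ℝ) ^ α) - B := by
        linarith [ih _ hlt hpos, mul_le_mul_of_nonneg_left (natCast_div_rpow_le hα j (p i)) hC]
      calc a i * E (j / p i) ≤ a i * (C * ((j : ℝ) ^ α / (p i : ℝ) ^ α) - B) :=
            mul_le_mul_of_nonneg_left hE (ha i hi)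
        _ = C * (j : ℝ) ^ α * (a i / (p i : ℝ) ^ α) - a i * B := by ring
    have hmain : C * (j : ℝ) ^ α * ∑ i ∈ s, a i / (p i : ℝ) ^ α ≤ C * (j : ℝ) ^ α :=
      mul_le_of_le_one_right (by positivity) hroot
    calc E j + B ≤ ∑ i ∈ s, a i * E (j / p i) + c + B := by linarith [hrec j hjN]
      _ ≤ ∑ i ∈ s, (C * (j : ℝ) ^ α * (a i / (p i : ℝ) ^ α) - a i * B) + c + B := by
          gcongr with i hi
          exact hterm i hi
      _ = C * (j : ℝ) ^ α * ∑ i ∈ s, a i / (p i : ℝ) ^ α - (∑ i ∈ s, a i - 1) * B + c := by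
          rw [sum_sub_distrib, ← mul_sum, ← sum_mul]
          ring
      _ ≤ C * (j : ℝ) ^ α := by linarith

theorem exists_le_mul_rpow_of_floor_recurrence (hα : 0 ≤ α) (ha : ∀ i ∈ s, 0 ≤ a i)
    (hp : ∀ i ∈ s, 2 ≤ p i) (hroot : ∑ i ∈ s, a i / (p i : ℝ) ^ α ≤ 1)
    (hsum : 1 < ∑ i ∈ s, a i) (hrec : ∀ j ≥ N, E j ≤ ∑ i ∈ s, a i * E (j / p i) + c) :
    ∃ C, 0 ≤ C ∧ ∀ j, 1 ≤ j → E j ≤ C * (j : ℝ) ^ α := by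
  set B := c / (∑ i ∈ s, a i - 1)
  set M := max N (s.sup p)
  set C := ∑ i ∈ range M, |E i + B|
  have hC : 0 ≤ C := sum_nonneg fun i _ => abs_nonneg _
  have hB : c ≤ (∑ i ∈ s, a i - 1) * B := (mul_div_cancel₀ c (by linarith)).ge
  have hpM : ∀ i ∈ s, 2 ≤ p i ∧ p i ≤ M := fun i hi =>
    ⟨hp i hi, (le_sup hi).trans (le_max_right _ _)⟩
  have hrecM : ∀ j ≥ M, E j ≤ ∑ i ∈ s, a i * E (j / p i) + c := fun j hj =>
    hrec j ((le_max_left _ _).trans hj)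
  have hbase : ∀ j, 1 ≤ j → j < M → E j + B ≤ C * (j : ℝ) ^ α := fun j hj hjM =>
    (le_sum_abs_range (fun i => E i + B) hjM).trans
      (le_mul_of_one_le_right hC (Real.one_le_rpow (by exact_mod_cast hj) hα))
  have hind := add_le_mul_rpow_of_floor_recurrence hα ha hpM hroot hB hC hrecM hbase
  refine ⟨C + |B|, by positivity, fun j hj => ?_⟩
  have hone : 1 ≤ (j : ℝ) ^ α := Real.one_le_rpow (by exact_mod_cast hj) hα
  nlinarith [hind j hj, neg_abs_le B, abs_nonneg B]

end FloorRecurrence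

theorem akra_bazzi_bound_two_terms_general (α : ℝ) (hα : 0 < α)
    (hroot : 4 / (2:ℝ) ^ α + 22 / (4:ℝ) ^ α = 1)
    (D : ℕ → ℝ≥0) (c : ℝ)
    (hrec : ∀ k ≥ 4, (D k : ℝ) ≤ 4 * (D ((k + 1) / 2) : ℝ) + 22 * (D ((k + 3) / 4) : ℝ) + c) :
    ∃ C : ℝ, ∀ k : ℕ, (D k : ℝ) ≤ C * ((k : ℝ) + 1) ^ α := by
  have hfloor : ∀ j ≥ 3, (D (j + 1) : ℝ) ≤
      ∑ i : Fin 2, ![4, 22] i * (D (j / ![2, 4] i + 1) : ℝ) + c := by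
    intro j hj
    have h2 : (j + 1 + 1) / 2 = j / 2 + 1 := by omega
    have h4 : (j + 1 + 3) / 4 = j / 4 + 1 := by omega
    simpa [h2, h4] using hrec (j + 1) (by omega)
  obtain ⟨C, hC, hE⟩ := exists_le_mul_rpow_of_floor_recurrence (E := fun j => (D (j + 1) : ℝ))
    hα.le (by simp [Fin.forall_fin_two]) (by simp [Fin.forall_fin_two])
    (by simpa using hroot.le) (by norm_num) hfloor
  refine exists_forall_le_mul_of_forall_ge (N := 2) (C := C)
    (fun k => Real.one_le_rpow (by simp) hα.le) fun k hk => ?_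
  obtain ⟨j, rfl⟩ : ∃ j, k = j + 1 := ⟨k - 1, by omega⟩
  calc (D (j + 1) : ℝ) ≤ C * (j : ℝ) ^ α := hE j (by omega)
    _ ≤ C * (((j + 1 : ℕ) : ℝ) + 1) ^ α := by gcongr; push_cast; linarith

theorem akra_bazzi_bound_two_terms (α : ℝ) (hα : 0 < α)
    (hroot : 4 / (2:ℝ) ^ α + 22 / (4:ℝ) ^ α = 1)
    (D : ℕ → ℝ≥0) (c C₀ : ℝ) (hc : 0 < c) (hC₀ : 0 < C₀)
    (hrec : ∀ k ≥ 4, (D k : ℝ) ≤ 4 * (D ((k + 1) / 2) : ℝ) + 22 * (D ((k + 3) / 4) : ℝ) + c)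
    (hbase : ∀ k < 4, (D k : ℝ) ≤ C₀) :
    ∃ C : ℝ, ∀ k : ℕ, (D k : ℝ) ≤ C * ((k : ℝ) + 1) ^ α :=
  akra_bazzi_bound_two_terms_general α hα hroot D c hrec
end

section
/- Let α > 1 satisfy 4/2^α + 12/4^α + 60/8^α = 1, and let D : ℕ → ℝ≥0 satisfy D(k) ≤ 4·D(⌈k/2⌉) + 12·D(⌈k/4⌉) + 60·D(⌈k/8⌉) + c for all k ≥ 8, with D(k) ≤ C₀ for k < 8. Then there exists C such that D(k) ≤ C·(k+1)^α for all k. -/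
open scoped NNReal

/-!
Compare `D` with `A * g k - B`, where `g k = max (k - 1) (1/2) ^ α`. Since `⌈k/b⌉ - 1 ≤ (k - 1)/b`,
the root equation makes `(k - 1) ^ α` an exact supersolution of the homogeneous recurrence, and the
floor `1/2` keeps `g` away from `0` so that the base values fit under `A * g`. The additive constant
`c` is absorbed by `B`: the recurrence carries `B` with total weight `∑ aᵢ = 76 > 1`, and the
surplus `(∑ aᵢ - 1) * B` pays for `c`.
-/

open Finset

noncomputable def shiftedRpow (α : ℝ) (k : ℕ) : ℝ := max ((k : ℝ) - 1) (1 / 2) ^ α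

lemma half_rpow_le_shiftedRpow {α : ℝ} (hα : 0 ≤ α) (k : ℕ) : (1 / 2 : ℝ) ^ α ≤ shiftedRpow α k :=
  Real.rpow_le_rpow (by norm_num) (le_max_right _ _) hα

lemma shiftedRpow_le_rpow_add_one {α : ℝ} (hα : 0 ≤ α) (k : ℕ) :
    shiftedRpow α k ≤ ((k : ℝ) + 1) ^ α :=
  have hk : (0 : ℝ) ≤ k := k.cast_nonneg
  Real.rpow_le_rpow (by positivity) (max_le (by linarith) (by linarith)) hα

lemma shiftedRpow_ceilDiv_le {α : ℝ} (hα : 0 ≤ α) {k b : ℕ} (hb : 0 < b) (hk : b + 2 ≤ 2 * k) :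
    shiftedRpow α ((k + b - 1) / b) ≤ shiftedRpow α k / (b : ℝ) ^ α := by
  have hb' : (1 : ℝ) ≤ b := by exact_mod_cast hb
  have hkb : (b : ℝ) + 2 ≤ 2 * k := by exact_mod_cast hk
  have hquot : (((k + b - 1) / b : ℕ) : ℝ) ≤ ((k : ℝ) - 1) / b + 1 := by
    calc (((k + b - 1) / b : ℕ) : ℝ) ≤ ((k + b - 1 : ℕ) : ℝ) / b := Nat.cast_div_le
      _ = ((k : ℝ) - 1) / b + 1 := by
        rw [Nat.cast_sub (by omega)]; push_cast; field_simp; ring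
  have hhalf : 1 / 2 ≤ ((k : ℝ) - 1) / b := by rw [le_div_iff₀ (by linarith)]; linarith
  have hmax : max ((k : ℝ) - 1) (1 / 2) = (k : ℝ) - 1 := max_eq_left (by linarith)
  unfold shiftedRpow
  rw [hmax, ← Real.div_rpow (by linarith) (by linarith)]
  exact Real.rpow_le_rpow (by positivity) (max_le (by linarith) hhalf) hα

lemma add_sub_one_div_lt_self {k b : ℕ} (hb : 2 ≤ b) (hk : 2 ≤ k) : (k + b - 1) / b < k := by
  have := Nat.mul_le_mul_left b hk
  have := Nat.mul_le_mul_right k hb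
  exact Nat.div_lt_of_lt_mul (by omega)

variable {ι : Type*} [Fintype ι]

lemma sum_mul_shiftedRpow_ceilDiv_le {a : ι → ℝ} {b : ι → ℕ} {α : ℝ} (ha : ∀ i, 0 ≤ a i)
    (hb : ∀ i, 0 < b i) (hα : 0 ≤ α) (hroot : ∑ i, a i / (b i : ℝ) ^ α = 1) {k : ℕ}
    (hk : ∀ i, b i + 2 ≤ 2 * k) :
    ∑ i, a i * shiftedRpow α ((k + b i - 1) / b i) ≤ shiftedRpow α k :=
  calc ∑ i, a i * shiftedRpow α ((k + b i - 1) / b i)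
      ≤ ∑ i, a i * (shiftedRpow α k / (b i : ℝ) ^ α) := by
        gcongr with i
        exacts [ha i, shiftedRpow_ceilDiv_le hα (hb i) (hk i)]
    _ = shiftedRpow α k * ∑ i, a i / (b i : ℝ) ^ α := by
        rw [mul_sum]; congr 1 with i; ring
    _ = shiftedRpow α k := by rw [hroot, mul_one]

lemma one_lt_sum_of_sum_div_rpow_eq_one {a : ι → ℝ} {b : ι → ℕ} {α : ℝ} (ha : ∀ i, 0 ≤ a i)
    (hb : ∀ i, 2 ≤ b i) (hα : 0 < α) (hroot : ∑ i, a i / (b i : ℝ) ^ α = 1) :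
    1 < ∑ i, a i := by
  have hbα : ∀ i, 1 < (b i : ℝ) ^ α := fun i =>
    Real.one_lt_rpow (by exact_mod_cast (hb i).trans_lt' one_lt_two) hα
  obtain ⟨i, -, hi⟩ := exists_ne_zero_of_sum_ne_zero (hroot ▸ one_ne_zero)
  rw [← hroot]
  refine sum_lt_sum (fun j _ => div_le_self (ha j) (hbα j).le) ⟨i, mem_univ i, ?_⟩
  exact div_lt_self ((ha i).lt_of_ne (by rintro h; simp [← h] at hi)) (hbα i)

lemma le_mul_sub_of_le_sum_mul {a : ι → ℝ} {r : ι → ℕ → ℕ} {D g : ℕ → ℝ} {k₀ : ℕ} {A B c : ℝ}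
    (ha : ∀ i, 0 ≤ a i) (hA : 0 ≤ A) (hc : c ≤ (∑ i, a i - 1) * B)
    (hr : ∀ k ≥ k₀, ∀ i, r i k < k)
    (hrec : ∀ k ≥ k₀, D k ≤ ∑ i, a i * D (r i k) + c)
    (hg : ∀ k ≥ k₀, ∑ i, a i * g (r i k) ≤ g k)
    (hbase : ∀ k < k₀, D k ≤ A * g k - B) (k : ℕ) :
    D k ≤ A * g k - B := by
  induction k using Nat.strong_induction_on with
  | _ k ih =>
    rcases lt_or_ge k k₀ with hk | hk
    · exact hbase k hk
    calc D k ≤ ∑ i, a i * D (r i k) + c := hrec k hk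
      _ ≤ ∑ i, a i * (A * g (r i k) - B) + c := by
          gcongr with i
          exacts [ha i, ih _ (hr k hk i)]
      _ = A * ∑ i, a i * g (r i k) - (∑ i, a i) * B + c := by
          simp only [mul_sub, sum_sub_distrib, mul_sum, sum_mul, mul_left_comm]
      _ ≤ A * g k - B := by nlinarith [mul_le_mul_of_nonneg_left (hg k hk) hA]

theorem exists_le_mul_rpow_of_le_sum_ceilDiv {a : ι → ℝ} {b : ι → ℕ} {α c C₀ : ℝ} {k₀ : ℕ}
    {D : ℕ → ℝ} (ha : ∀ i, 0 ≤ a i) (hb : ∀ i, 2 ≤ b i) (hα : 0 < α)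
    (hroot : ∑ i, a i / (b i : ℝ) ^ α = 1) (hk₀ : ∀ i, b i + 2 ≤ 2 * k₀) (hc : 0 ≤ c)
    (hC₀ : 0 ≤ C₀) (hrec : ∀ k ≥ k₀, D k ≤ ∑ i, a i * D ((k + b i - 1) / b i) + c)
    (hbase : ∀ k < k₀, D k ≤ C₀) :
    ∃ C : ℝ, ∀ k : ℕ, D k ≤ C * ((k : ℝ) + 1) ^ α := by
  set B := c / (∑ i, a i - 1)
  set A := (C₀ + B) * 2 ^ α
  have hsum := one_lt_sum_of_sum_div_rpow_eq_one ha hb hα hroot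
  have hB : 0 ≤ B := div_nonneg hc (by linarith)
  have hA : 0 ≤ A := by positivity
  have hcB : c ≤ (∑ i, a i - 1) * B := (mul_div_cancel₀ c (sub_pos.2 hsum).ne').ge
  have hdesc : ∀ k ≥ k₀, ∀ i, (k + b i - 1) / b i < k := fun k hk i =>
    add_sub_one_div_lt_self (hb i) (by linarith [hb i, hk₀ i])
  have hsuper : ∀ k ≥ k₀, ∑ i, a i * shiftedRpow α ((k + b i - 1) / b i) ≤ shiftedRpow α k :=
    fun k hk => sum_mul_shiftedRpow_ceilDiv_le ha (fun i => by linarith [hb i]) hα.le hroot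
      (fun i => (hk₀ i).trans (by omega))
  have hbase' : ∀ k < k₀, D k ≤ A * shiftedRpow α k - B := fun k hk =>
    calc D k ≤ C₀ := hbase k hk
      _ = A * (1 / 2) ^ α - B := by
        rw [mul_assoc, ← Real.mul_rpow (by norm_num) (by norm_num)]; norm_num
      _ ≤ A * shiftedRpow α k - B := by
        gcongr; exact half_rpow_le_shiftedRpow hα.le k
  have hbound := le_mul_sub_of_le_sum_mul ha hA hcB hdesc hrec hsuper hbase'
  refine ⟨A, fun k => (hbound k).trans ?_⟩
  calc A * shiftedRpow α k - B ≤ A * shiftedRpow α k := by linarith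
    _ ≤ A * ((k : ℝ) + 1) ^ α := by
      gcongr; exact shiftedRpow_le_rpow_add_one hα.le k

theorem akra_bazzi_bound_three_terms (α : ℝ) (hα : 1 < α)
    (hroot : 4 / (2:ℝ) ^ α + 12 / (4:ℝ) ^ α + 60 / (8:ℝ) ^ α = 1)
    (D : ℕ → ℝ≥0) (c C₀ : ℝ) (hc : 0 < c) (hC₀ : 0 < C₀)
    (hrec : ∀ k ≥ 8, (D k : ℝ) ≤
      4 * (D ((k + 1) / 2) : ℝ) + 12 * (D ((k + 3) / 4) : ℝ) + 60 * (D ((k + 7) / 8) : ℝ) + c)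
    (hbase : ∀ k < 8, (D k : ℝ) ≤ C₀) :
    ∃ C : ℝ, ∀ k : ℕ, (D k : ℝ) ≤ C * ((k : ℝ) + 1) ^ α :=
  exists_le_mul_rpow_of_le_sum_ceilDiv (a := ![4, 12, 60]) (b := ![2, 4, 8]) (k₀ := 8)
    (fun i => by fin_cases i <;> norm_num) (fun i => by fin_cases i <;> norm_num)
    (by linarith) (by simpa [Fin.sum_univ_three] using hroot) (fun i => by fin_cases i <;> norm_num)
    hc.le hC₀.le (fun k hk => by simpa [Fin.sum_univ_three] using hrec k hk) hbase
end

section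
/- If the real sequence defined by the exact recurrence E(k) = 4·E(k/2) + 12·E(k/4) + 60·E(k/8) + c (interpreted on powers of 8, i.e., k = 8^m, with E(1) = e₀ > 0, c > 0) then E(8^m) = Θ(8^(m·α)) where α is the root of 4/2^α + 12/4^α + 60/8^α = 1; in particular E(8^m)/8^(m·α) is bounded above and below by positive constants. -/
/-!
Along `k = 2ⁿ` the recurrence becomes the third-order linear recurrence
`F (n+3) = 4 F (n+2) + 12 F (n+1) + 60 F n + c`, and `l = 2^α` is a positive root of its
characteristic polynomial `X³ - 4X² - 12X - 60`. Since the coefficients are nonnegative,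
solutions of the recurrence are ordered as soon as their first three values are. Hence `F` lies
above `A lⁿ` (as `c ≥ 0`), while `F + c/75` solves the homogeneous recurrence and lies below `B lⁿ`.
-/

theorem exists_pos_mul_pow_le {l : ℝ} (hl : 0 < l) {f : ℕ → ℝ} (N : ℕ) (hf : ∀ i < N, 0 < f i) :
    ∃ A, 0 < A ∧ ∀ i < N, A * l ^ i ≤ f i := by
  induction N with
  | zero => exact ⟨1, one_pos, by simp⟩
  | succ N ih =>
    obtain ⟨A, hA, hAf⟩ := ih fun i hi => hf i (by omega)
    have hN : 0 < f N / l ^ N := div_pos (hf N (by omega)) (by positivity)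
    refine ⟨min A (f N / l ^ N), lt_min hA hN, fun i hi => ?_⟩
    rcases Nat.lt_succ_iff_lt_or_eq.mp hi with hi | rfl
    · exact (mul_le_mul_of_nonneg_right (min_le_left _ _) (by positivity)).trans (hAf i hi)
    · exact (le_div_iff₀ (by positivity)).mp (min_le_right _ _)

theorem exists_pos_le_mul_pow {l : ℝ} (hl : 0 < l) (f : ℕ → ℝ) (N : ℕ) :
    ∃ B, 0 < B ∧ ∀ i < N, f i ≤ B * l ^ i := by
  induction N with
  | zero => exact ⟨1, one_pos, by simp⟩
  | succ N ih =>
    obtain ⟨B, hB, hBf⟩ := ih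
    refine ⟨max B (f N / l ^ N), lt_max_of_lt_left hB, fun i hi => ?_⟩
    rcases Nat.lt_succ_iff_lt_or_eq.mp hi with hi | rfl
    · exact (hBf i hi).trans (mul_le_mul_of_nonneg_right (le_max_left _ _) (by positivity))
    · exact (div_le_iff₀ (by positivity)).mp (le_max_right _ _)

namespace LinearRecurrence

variable {a b d : ℝ}

theorem le_of_sub_of_super (ha : 0 ≤ a) (hb : 0 ≤ b) (hd : 0 ≤ d) {u v : ℕ → ℝ}
    (hu : ∀ n, u (n + 3) ≤ a * u (n + 2) + b * u (n + 1) + d * u n)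
    (hv : ∀ n, a * v (n + 2) + b * v (n + 1) + d * v n ≤ v (n + 3))
    (h₀ : u 0 ≤ v 0) (h₁ : u 1 ≤ v 1) (h₂ : u 2 ≤ v 2) (n : ℕ) : u n ≤ v n := by
  suffices ∀ n, u n ≤ v n ∧ u (n + 1) ≤ v (n + 1) ∧ u (n + 2) ≤ v (n + 2) from (this n).1
  intro n
  induction n with
  | zero => exact ⟨h₀, h₁, h₂⟩
  | succ n ih =>
    obtain ⟨e₀, e₁, e₂⟩ := ih
    refine ⟨e₁, e₂, ?_⟩
    calc u (n + 3) ≤ a * u (n + 2) + b * u (n + 1) + d * u n := hu n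
      _ ≤ a * v (n + 2) + b * v (n + 1) + d * v n := by gcongr
      _ ≤ v (n + 3) := hv n

theorem mul_pow_add_three {l : ℝ} (hl : l ^ 3 = a * l ^ 2 + b * l + d) (C : ℝ) (n : ℕ) :
    C * l ^ (n + 3) = a * (C * l ^ (n + 2)) + b * (C * l ^ (n + 1)) + d * (C * l ^ n) := by
  linear_combination C * l ^ n * hl

theorem exists_mul_pow_le_le_mul_pow {c l : ℝ} (ha : 0 ≤ a) (hb : 0 ≤ b) (hd : 0 ≤ d)
    (hs : 1 < a + b + d) (hc : 0 ≤ c) (hl : 0 < l) (hchar : l ^ 3 = a * l ^ 2 + b * l + d)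
    {F : ℕ → ℝ} (hF : ∀ n, F (n + 3) = a * F (n + 2) + b * F (n + 1) + d * F n + c)
    (hpos : ∀ i < 3, 0 < F i) :
    ∃ A B, 0 < A ∧ 0 < B ∧ ∀ n, A * l ^ n ≤ F n ∧ F n ≤ B * l ^ n := by
  obtain ⟨A, hA, hAF⟩ := exists_pos_mul_pow_le hl 3 hpos
  obtain ⟨K, hK, hKc⟩ : ∃ K, 0 ≤ K ∧ (a + b + d - 1) * K = c :=
    ⟨c / (a + b + d - 1), div_nonneg hc (by linarith), mul_div_cancel₀ c (by linarith)⟩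
  obtain ⟨B, hB, hFB⟩ := exists_pos_le_mul_pow hl (fun n => F n + K) 3
  refine ⟨A, B, hA, hB, fun n => ⟨?_, ?_⟩⟩
  · refine le_of_sub_of_super ha hb hd (u := fun n => A * l ^ n) (fun n => ?_) (fun n => ?_)
      (hAF 0 (by norm_num)) (hAF 1 (by norm_num)) (hAF 2 (by norm_num)) n
    · rw [mul_pow_add_three hchar]
    · rw [hF]; linarith
  · suffices F n + K ≤ B * l ^ n by linarith
    refine le_of_sub_of_super ha hb hd (u := fun n => F n + K) (v := fun n => B * l ^ n)
      (fun n => ?_) (fun n => ?_) (hFB 0 (by norm_num)) (hFB 1 (by norm_num))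
      (hFB 2 (by norm_num)) n
    · simp only [hF]; exact le_of_eq (by linear_combination -hKc)
    · rw [mul_pow_add_three hchar]

end LinearRecurrence

theorem exact_recurrence_theta_general (α c : ℝ) (hc : 0 < c)
    (hroot : 4 / (2:ℝ) ^ α + 12 / (4:ℝ) ^ α + 60 / (8:ℝ) ^ α = 1)
    (E : ℝ → ℝ)
    (hpos : ∀ k : ℝ, 1 ≤ k → 0 < E k)
    (hrec : ∀ k : ℝ, 8 ≤ k → E k = 4 * E (k / 2) + 12 * E (k / 4) + 60 * E (k / 8) + c) :
    ∃ c₁ c₂ : ℝ, 0 < c₁ ∧ 0 < c₂ ∧ ∀ m : ℕ,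
      c₁ * (8:ℝ) ^ ((m : ℝ) * α) ≤ E ((8:ℝ) ^ (m : ℕ)) ∧
      E ((8:ℝ) ^ (m : ℕ)) ≤ c₂ * (8:ℝ) ^ ((m : ℝ) * α) := by
  set l := (2:ℝ) ^ α
  have hl : 0 < l := by positivity
  have hpow (k : ℕ) : ((2:ℝ) ^ k) ^ α = l ^ k := (Real.rpow_pow_comm zero_le_two α k).symm
  have hchar : l ^ 3 = 4 * l ^ 2 + 12 * l + 60 := by
    rw [show (4:ℝ) = 2 ^ 2 by norm_num, show (8:ℝ) = 2 ^ 3 by norm_num, hpow, hpow] at hroot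
    field_simp at hroot
    linear_combination -hroot
  have hF (n : ℕ) : E (2 ^ (n + 3)) =
      4 * E (2 ^ (n + 2)) + 12 * E (2 ^ (n + 1)) + 60 * E (2 ^ n) + c := by
    have h8 : (8:ℝ) ≤ 2 ^ (n + 3) := by
      rw [pow_add]; nlinarith [one_le_pow₀ (M₀ := ℝ) (n := n) one_le_two]
    rw [hrec _ h8]; ring_nf
  obtain ⟨A, B, hA, hB, hAB⟩ := LinearRecurrence.exists_mul_pow_le_le_mul_pow
    (by norm_num) (by norm_num) (by norm_num) (by norm_num) hc.le hl hchar
    (F := fun n => E (2 ^ n)) hF (fun i _ => hpos _ (one_le_pow₀ one_le_two))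
  refine ⟨A, B, hA, hB, fun m => ?_⟩
  have h8m : (8:ℝ) ^ ((m : ℝ) * α) = l ^ (3 * m) := by
    rw [mul_comm, Real.rpow_mul_natCast (by norm_num), show (8:ℝ) = 2 ^ 3 by norm_num, hpow,
      pow_mul]
  rw [h8m, show (8:ℝ) ^ m = 2 ^ (3 * m) by rw [pow_mul]; norm_num]
  exact hAB (3 * m)

theorem exact_recurrence_theta (α c e₀ : ℝ) (hc : 0 < c) (he₀ : 0 < e₀)
    (hroot : 4 / (2:ℝ) ^ α + 12 / (4:ℝ) ^ α + 60 / (8:ℝ) ^ α = 1)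
    (E : ℝ → ℝ)
    (hpos : ∀ k : ℝ, 1 ≤ k → 0 < E k)
    (hbase : E 1 = e₀)
    (hrec : ∀ k : ℝ, 8 ≤ k → E k = 4 * E (k / 2) + 12 * E (k / 4) + 60 * E (k / 8) + c) :
    ∃ c₁ c₂ : ℝ, 0 < c₁ ∧ 0 < c₂ ∧ ∀ m : ℕ,
      c₁ * (8:ℝ) ^ ((m : ℝ) * α) ≤ E ((8:ℝ) ^ (m : ℕ)) ∧
      E ((8:ℝ) ^ (m : ℕ)) ≤ c₂ * (8:ℝ) ^ ((m : ℝ) * α) :=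
  exact_recurrence_theta_general α c hc hroot E hpos hrec
end
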